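/- Scaling generator identity: for a ground state (φ,ψ) and Λf = f + x·∇f, one has L_R(Λφ, Λψ) = −2(φ,ψ). -/

import Mathlib

noncomputable section

abbrev E3 : Type := EuclideanSpace ℝ (Fin 3)

def lapR (f : E3 → ℝ) (x : E3) : ℝ :=
  ∑ i : Fin 3, fderiv ℝ (fun y => fderiv ℝ f y (EuclideanSpace.single i 1)) x
    (EuclideanSpace.single i 1)

/-- The scaling generator `Λf = f + x·∇f`. -/
def scalingGen (f : E3 → ℝ) (x : E3) : ℝ := f x + fderiv ℝ f x x

namespace LRaux

def ee (i : Fin 3) : E3 := EuclideanSpace.single i 1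

def dd (v : E3) (f : E3 → ℝ) : E3 → ℝ := fun x => fderiv ℝ f x v

lemma dd_smooth {f : E3 → ℝ} (hf : ContDiff ℝ (⊤ : ℕ∞) f) (v : E3) : ContDiff ℝ (⊤ : ℕ∞) (dd v f) :=
  (hf.fderiv_right (le_refl _)).clm_apply contDiff_const

lemma diffAt {f : E3 → ℝ} (hf : ContDiff ℝ (⊤ : ℕ∞) f) (x : E3) : DifferentiableAt ℝ f x :=
  (hf.differentiable (by simp)) x

lemma dd_add {f g : E3 → ℝ} (hf : ContDiff ℝ (⊤ : ℕ∞) f) (hg : ContDiff ℝ (⊤ : ℕ∞) g) (v : E3) :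
    dd v (fun x => f x + g x) = fun x => dd v f x + dd v g x := by
  funext x
  simp only [dd]
  rw [fderiv_fun_add (diffAt hf x) (diffAt hg x)]
  simp

lemma dd_mul {f g : E3 → ℝ} (hf : ContDiff ℝ (⊤ : ℕ∞) f) (hg : ContDiff ℝ (⊤ : ℕ∞) g) (v : E3) :
    dd v (fun x => f x * g x) = fun x => dd v f x * g x + f x * dd v g x := by
  funext x
  simp only [dd]
  rw [fderiv_fun_mul (diffAt hf x) (diffAt hg x)]
  simp [smul_eq_mul]
  ring

lemma dd_const_mul {f : E3 → ℝ} (hf : ContDiff ℝ (⊤ : ℕ∞) f) (c : ℝ) (v : E3) :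
    dd v (fun x => c * f x) = fun x => c * dd v f x := by
  funext x
  simp only [dd]
  rw [fderiv_const_mul (diffAt hf x)]
  simp

lemma dd_sum {F : Fin 3 → E3 → ℝ} (hF : ∀ i, ContDiff ℝ (⊤ : ℕ∞) (F i)) (v : E3) :
    dd v (fun x => ∑ i : Fin 3, F i x) = fun x => ∑ i : Fin 3, dd v (F i) x := by
  funext x
  simp only [dd]
  rw [fderiv_fun_sum (fun i _ => diffAt (hF i) x)]
  simp

lemma dd_coord (i : Fin 3) (v : E3) : dd v (fun y : E3 => y i) = fun _ => v i := by
  funext x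
  have h : (fun y : E3 => y i) = (EuclideanSpace.proj i : E3 →L[ℝ] ℝ) := rfl
  simp only [dd]
  rw [h, ContinuousLinearMap.fderiv]
  rfl

lemma coord_smooth (i : Fin 3) : ContDiff ℝ (⊤ : ℕ∞) (fun y : E3 => y i) :=
  (EuclideanSpace.proj i : E3 →L[ℝ] ℝ).contDiff

lemma dd_snd {f : E3 → ℝ} (hf : ContDiff ℝ (⊤ : ℕ∞) f) (v w : E3) (x : E3) :
    dd v (dd w f) x = fderiv ℝ (fderiv ℝ f) x v w := by
  have hd : DifferentiableAt ℝ (fderiv ℝ f) x :=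
    ((hf.fderiv_right (le_refl _) : ContDiff ℝ (⊤ : ℕ∞) (fderiv ℝ f)).differentiable (by simp)) x
  show fderiv ℝ (fun y => fderiv ℝ f y w) x v = _
  rw [fderiv_clm_apply hd (differentiableAt_const w)]
  simp

lemma dd_comm {f : E3 → ℝ} (hf : ContDiff ℝ (⊤ : ℕ∞) f) (v w : E3) :
    dd v (dd w f) = dd w (dd v f) := by
  funext x
  rw [dd_snd hf v w x, dd_snd hf w v x]
  exact (hf.contDiffAt.isSymmSndFDerivAt (by rw [minSmoothness_of_isRCLikeNormedField]; exact WithTop.coe_le_coe.mpr le_top)) v w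

lemma fderiv_eq_sum {g : E3 → ℝ} (hg : ContDiff ℝ (⊤ : ℕ∞) g) (x v : E3) :
    fderiv ℝ g x v = ∑ i : Fin 3, v i * dd (ee i) g x := by
  have hv : (∑ i : Fin 3, v i • ee i) = v := by
    ext j
    fin_cases j <;> simp [ee, Fin.sum_univ_three, EuclideanSpace.single_apply, Fin.ext_iff]
  conv_lhs => rw [← hv]
  rw [map_sum]
  simp [dd, smul_eq_mul]

lemma sum_ee_mul (j : Fin 3) (c : Fin 3 → ℝ) : ∑ i : Fin 3, ee j i * c i = c j := by
  simp [ee, EuclideanSpace.single_apply, ite_mul]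

lemma dd_mul_coord {g : E3 → ℝ} (hg : ContDiff ℝ (⊤ : ℕ∞) g) (i j : Fin 3) :
    dd (ee j) (fun x => x i * g x) = fun x => ee j i * g x + x i * dd (ee j) g x := by
  rw [dd_mul (coord_smooth i) hg]
  funext x
  rw [congrFun (dd_coord i (ee j)) x]

lemma dd_scalingGen {f : E3 → ℝ} (hf : ContDiff ℝ (⊤ : ℕ∞) f) (j : Fin 3) :
    dd (ee j) (scalingGen f) =
      fun x => 2 * dd (ee j) f x + ∑ i : Fin 3, x i * dd (ee j) (dd (ee i) f) x := by
  have h1 : scalingGen f = fun x => f x + ∑ i : Fin 3, x i * dd (ee i) f x := by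
    funext x; simp only [scalingGen]; rw [fderiv_eq_sum hf x x]
  have hs : ∀ i : Fin 3, ContDiff ℝ (⊤ : ℕ∞) (fun x : E3 => x i * dd (ee i) f x) :=
    fun i => (coord_smooth i).mul (dd_smooth hf (ee i))
  rw [h1, dd_add hf (ContDiff.sum fun i _ => hs i), dd_sum hs]
  funext x
  beta_reduce
  rw [Finset.sum_congr rfl (fun i _ => congrFun (dd_mul_coord (dd_smooth hf (ee i)) i j) x)]
  rw [Finset.sum_add_distrib, sum_ee_mul j (fun i => dd (ee i) f x)]
  ring

lemma dd2_scalingGen {f : E3 → ℝ} (hf : ContDiff ℝ (⊤ : ℕ∞) f) (j : Fin 3) :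
    dd (ee j) (dd (ee j) (scalingGen f)) =
      fun x => 3 * dd (ee j) (dd (ee j) f) x
        + ∑ i : Fin 3, x i * dd (ee j) (dd (ee j) (dd (ee i) f)) x := by
  rw [dd_scalingGen hf j]
  have hs : ∀ i : Fin 3, ContDiff ℝ (⊤ : ℕ∞) (fun x : E3 => x i * dd (ee j) (dd (ee i) f) x) :=
    fun i => (coord_smooth i).mul (dd_smooth (dd_smooth hf _) _)
  rw [dd_add (contDiff_const.mul (dd_smooth hf (ee j))) (ContDiff.sum fun i _ => hs i),
    dd_sum hs, dd_const_mul (dd_smooth hf (ee j)) 2 (ee j)]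
  funext x
  beta_reduce
  rw [Finset.sum_congr rfl
    (fun i _ => congrFun (dd_mul_coord (dd_smooth (dd_smooth hf (ee i)) (ee j)) i j) x)]
  rw [Finset.sum_add_distrib, sum_ee_mul j (fun i => dd (ee j) (dd (ee i) f) x)]
  ring

lemma lapR_eq (f : E3 → ℝ) : lapR f = fun x => ∑ j : Fin 3, dd (ee j) (dd (ee j) f) x := rfl

lemma lapR_smooth {f : E3 → ℝ} (hf : ContDiff ℝ (⊤ : ℕ∞) f) : ContDiff ℝ (⊤ : ℕ∞) (lapR f) := by
  rw [lapR_eq]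
  exact ContDiff.sum fun j _ => dd_smooth (dd_smooth hf _) _

lemma lapR_scalingGen {f : E3 → ℝ} (hf : ContDiff ℝ (⊤ : ℕ∞) f) (x : E3) :
    lapR (scalingGen f) x = 3 * lapR f x + fderiv ℝ (lapR f) x x := by
  have h3 : ∀ i, dd (ee i) (lapR f) x
      = ∑ j : Fin 3, dd (ee j) (dd (ee j) (dd (ee i) f)) x := by
    intro i
    rw [lapR_eq,
      congrFun (dd_sum (fun j => dd_smooth (dd_smooth hf (ee j)) (ee j)) (ee i)) x]
    refine Finset.sum_congr rfl fun j _ => ?_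
    rw [dd_comm (dd_smooth hf (ee j)) (ee i) (ee j)]
    rw [dd_comm hf (ee i) (ee j)]
  have h2 : fderiv ℝ (lapR f) x x
      = ∑ j : Fin 3, ∑ i : Fin 3, x i * dd (ee j) (dd (ee j) (dd (ee i) f)) x := by
    rw [fderiv_eq_sum (lapR_smooth hf) x x]
    rw [Finset.sum_congr rfl fun i _ => by rw [h3 i, Finset.mul_sum]]
    exact Finset.sum_comm
  have h1 : lapR (scalingGen f) x
      = ∑ j : Fin 3, (3 * dd (ee j) (dd (ee j) f) x
          + ∑ i : Fin 3, x i * dd (ee j) (dd (ee j) (dd (ee i) f)) x) := by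
    rw [lapR_eq]
    exact Finset.sum_congr rfl fun j _ => congrFun (dd2_scalingGen hf j) x
  rw [h1, Finset.sum_add_distrib, ← Finset.mul_sum, h2]
  rfl

lemma dd_cubic (β : ℝ) {φ ψ : E3 → ℝ} (hφ : ContDiff ℝ (⊤ : ℕ∞) φ) (hψ : ContDiff ℝ (⊤ : ℕ∞) ψ) (v : E3) :
    dd v (fun x => (φ x ^ 2 + β * ψ x ^ 2) * φ x)
      = fun x => (3 * φ x ^ 2 + β * ψ x ^ 2) * dd v φ x
          + 2 * β * φ x * ψ x * dd v ψ x := by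
  have h : (fun x => (φ x ^ 2 + β * ψ x ^ 2) * φ x)
      = fun x => φ x * (φ x * φ x) + β * (ψ x * (ψ x * φ x)) := by
    funext x; ring
  rw [h, dd_add (hφ.mul (hφ.mul hφ)) (contDiff_const.mul (hψ.mul (hψ.mul hφ))),
    dd_const_mul (hψ.mul (hψ.mul hφ)), dd_mul hφ (hφ.mul hφ), dd_mul hφ hφ,
    dd_mul hψ (hψ.mul hφ), dd_mul hψ hφ]
  funext x
  beta_reduce
  ring

end LRaux

open LRaux in
/-- for a (smooth, decaying) solution `(φ,ψ)` of the elliptic system,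
`L_R(Λφ, Λψ) = −2(φ,ψ)`, where `Λf = f + x·∇f`. -/
theorem LR_scaling_generator (β : ℝ) (hβ : 0 < β) (φ ψ : E3 → ℝ)
    (hφ : ContDiff ℝ (⊤ : ℕ∞) φ) (hψ : ContDiff ℝ (⊤ : ℕ∞) ψ)
    (heq1 : ∀ x, lapR φ x - φ x + (φ x ^ 2 + β * ψ x ^ 2) * φ x = 0)
    (heq2 : ∀ x, lapR ψ x - ψ x + (ψ x ^ 2 + β * φ x ^ 2) * ψ x = 0) :
    ∀ x : E3,
      scalingGen φ x - lapR (scalingGen φ) x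
          - (3 * φ x ^ 2 + β * ψ x ^ 2) * scalingGen φ x
          - 2 * β * φ x * ψ x * scalingGen ψ x = -2 * φ x ∧
      scalingGen ψ x - lapR (scalingGen ψ) x
          - (3 * ψ x ^ 2 + β * φ x ^ 2) * scalingGen ψ x
          - 2 * β * φ x * ψ x * scalingGen φ x = -2 * ψ x := by
  intro x
  have hN1 : lapR φ = fun y => φ y - (φ y ^ 2 + β * ψ y ^ 2) * φ y := by
    funext y; have := heq1 y; linarith
  have hN2 : lapR ψ = fun y => ψ y - (ψ y ^ 2 + β * φ y ^ 2) * ψ y := by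
    funext y; have := heq2 y; linarith
  have hcub1 : ContDiff ℝ (⊤ : ℕ∞) (fun y => (φ y ^ 2 + β * ψ y ^ 2) * φ y) :=
    (((hφ.pow 2).add (contDiff_const.mul (hψ.pow 2))).mul hφ)
  have hcub2 : ContDiff ℝ (⊤ : ℕ∞) (fun y => (ψ y ^ 2 + β * φ y ^ 2) * ψ y) :=
    (((hψ.pow 2).add (contDiff_const.mul (hφ.pow 2))).mul hψ)
  have hDφ : fderiv ℝ (lapR φ) x x
      = fderiv ℝ φ x x - ((3 * φ x ^ 2 + β * ψ x ^ 2) * fderiv ℝ φ x x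
          + 2 * β * φ x * ψ x * fderiv ℝ ψ x x) := by
    rw [hN1]
    have hsub := fderiv_fun_sub (diffAt hφ x) (diffAt hcub1 x)
    have hc := congrFun (dd_cubic β hφ hψ x) x
    simp only [dd] at hc
    rw [hsub, ContinuousLinearMap.sub_apply, hc]
  have hDψ : fderiv ℝ (lapR ψ) x x
      = fderiv ℝ ψ x x - ((3 * ψ x ^ 2 + β * φ x ^ 2) * fderiv ℝ ψ x x
          + 2 * β * ψ x * φ x * fderiv ℝ φ x x) := by
    rw [hN2]
    have hsub := fderiv_fun_sub (diffAt hψ x) (diffAt hcub2 x)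
    have hc := congrFun (dd_cubic β hψ hφ x) x
    simp only [dd] at hc
    rw [hsub, ContinuousLinearMap.sub_apply, hc]
  have hv1 : lapR φ x = φ x - (φ x ^ 2 + β * ψ x ^ 2) * φ x := by
    have := heq1 x; linarith
  have hv2 : lapR ψ x = ψ x - (ψ x ^ 2 + β * φ x ^ 2) * ψ x := by
    have := heq2 x; linarith
  constructor
  · rw [show scalingGen φ x = φ x + fderiv ℝ φ x x from rfl,
      show scalingGen ψ x = ψ x + fderiv ℝ ψ x x from rfl,
      lapR_scalingGen hφ x, hDφ, hv1]
    ring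
  · rw [show scalingGen φ x = φ x + fderiv ℝ φ x x from rfl,
      show scalingGen ψ x = ψ x + fderiv ℝ ψ x x from rfl,
      lapR_scalingGen hψ x, hDψ, hv2]
    ring
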